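/- arXiv:2511.03331 — 3 statements merged into one kernel-verified Lean document; each statement's English description precedes it below -/
import Mathlib

section
/- The polynomial f(x) = x^6 + 3x^3 + 9 is not monogenic; that is, if α is a root of f and K = ℚ(α), then ℤ[α] is strictly smaller than the ring of integers of K. -/
/-!
Reducing modulo 2 gives `x⁶ + x³ + 1 = Φ₉`, which is irreducible over `𝔽₂` because `2` has
order `6 = φ(9)` modulo `9`; hence `f` is irreducible and is the minimal polynomial of `α` over `ℤ`.
Since `f` is a polynomial in `x³` and `ω = α³/3` is a primitive cube root of unity, `ωα = α⁴/3` is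
another root of `f`, so it is an algebraic integer of `ℚ(α)`. It does not lie in `ℤ[α]`: from
`α⁴ = 3 p(α)` we would get `f ∣ 3p - x⁴`, and modulo 3 this reads `x⁶ ∣ -x⁴`.
-/

open Polynomial IntermediateField

theorem minpoly_eq_of_irreducible_of_monic {R S : Type*} [CommRing R] [IsDomain R]
    [IsIntegrallyClosed R] [CommRing S] [IsDomain S] [Algebra R S] [Module.IsTorsionFree R S]
    {s : S} {p : R[X]} (hirr : Irreducible p) (hmonic : p.Monic) (hroot : aeval s p = 0) :
    minpoly R s = p :=
  have hs : IsIntegral R s := ⟨p, hmonic, hroot⟩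
  eq_of_monic_of_associated (minpoly.monic hs) hmonic <|
    (minpoly.irreducible hs).associated_of_dvd hirr (minpoly.isIntegrallyClosed_dvd hs hroot)

theorem irreducible_cyclotomic_nine_zmod_two : Irreducible (cyclotomic 9 (ZMod 2)) :=
  ZMod.irreducible_of_dvd_cyclotomic_of_natDegree (by norm_num) dvd_rfl <| by
    rw [natDegree_cyclotomic, Eq.comm, orderOf_eq_iff (by decide)]
    exact ⟨by decide, by decide⟩

namespace Sextic

noncomputable def f : ℤ[X] := X ^ 6 + 3 * X ^ 3 + 9

theorem monic : f.Monic := by unfold f; monicity!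

theorem aeval_eq {A : Type*} [CommRing A] (x : A) : aeval x f = x ^ 6 + 3 * x ^ 3 + 9 := by
  simp [f, map_ofNat]

theorem map_zmod_two : f.map (Int.castRingHom (ZMod 2)) = cyclotomic 9 (ZMod 2) := by
  rw [show 9 = 3 ^ (1 + 1) by rfl, cyclotomic_prime_pow_eq_geom_sum Nat.prime_three]
  simp only [f, Polynomial.map_add, Polynomial.map_pow, map_X, Polynomial.map_mul,
    Polynomial.map_ofNat, Finset.sum_range_succ, Finset.range_one, Finset.sum_singleton, pow_zero,
    pow_one]
  reduce_mod_char
  ring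

theorem map_zmod_three : f.map (Int.castRingHom (ZMod 3)) = X ^ 6 := by
  simp only [f, Polynomial.map_add, Polynomial.map_pow, map_X, Polynomial.map_mul,
    Polynomial.map_ofNat]
  reduce_mod_char

theorem irreducible : Irreducible f :=
  monic.irreducible_of_irreducible_map _ _ (map_zmod_two ▸ irreducible_cyclotomic_nine_zmod_two)

theorem aeval_mul_of_pow_three_eq_one {A : Type*} [CommRing A] {ω : A} (hω : ω ^ 3 = 1) (x : A) :
    aeval (ω * x) f = aeval x f := by
  rw [aeval_eq, aeval_eq]
  linear_combination (x ^ 6 * (ω ^ 3 + 1) + 3 * x ^ 3) * hω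

section Root

variable {K : Type*} [Field K] [CharZero K] {x : K} (hx : aeval x f = 0)
include hx

theorem minpoly_eq : minpoly ℤ x = f :=
  minpoly_eq_of_irreducible_of_monic irreducible monic hx

theorem aeval_pow_four_div_three : aeval (x ^ 4 / 3) f = 0 := by
  have hω : (x ^ 3 / 3) ^ 3 = 1 := by
    rw [aeval_eq] at hx
    linear_combination (x ^ 3 - 3) / 27 * hx
  rw [show x ^ 4 / 3 = x ^ 3 / 3 * x by ring, aeval_mul_of_pow_three_eq_one hω, hx]

theorem pow_four_div_three_notMem_adjoin : x ^ 4 / 3 ∉ Algebra.adjoin ℤ {x} := by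
  rw [Algebra.adjoin_singleton_eq_range_aeval]
  rintro ⟨p, hp : aeval x p = x ^ 4 / 3⟩
  have hroot : aeval x (C 3 * p - X ^ 4) = 0 := by
    simp [hp, map_ofNat, mul_div_cancel₀]
  have hdvd : f ∣ C 3 * p - X ^ 4 :=
    minpoly_eq hx ▸ minpoly.isIntegrallyClosed_dvd ⟨f, monic, hx⟩ hroot
  have hdvd_mod_three : (X ^ 6 : (ZMod 3)[X]) ∣ X ^ 4 := by
    simpa [map_zmod_three, CharP.ofNat_eq_zero] using
      Polynomial.map_dvd (Int.castRingHom (ZMod 3)) hdvd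
  simpa using natDegree_le_of_dvd hdvd_mod_three (pow_ne_zero 4 X_ne_zero)

end Root

end Sextic

/-- The polynomial `x^6 + 3x^3 + 9` is not monogenic: for a root `α` with
`K = ℚ(α)`, the order `ℤ[α]` is strictly smaller than the ring of integers of `K`. -/
theorem stmt_1 (α : ℂ) (hα : α^6 + 3*α^3 + 9 = 0) :
    Algebra.adjoin ℤ {(⟨α, IntermediateField.mem_adjoin_simple_self ℚ α⟩ : ℚ⟮α⟯)}
      < integralClosure ℤ ℚ⟮α⟯ := by
  set x : ℚ⟮α⟯ := ⟨α, mem_adjoin_simple_self ℚ α⟩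
  have hx : aeval x Sextic.f = 0 := by
    rw [← aeval_algebraMap_eq_zero_iff ℂ, Sextic.aeval_eq]
    exact hα
  rw [SetLike.lt_iff_le_and_exists]
  exact ⟨Algebra.adjoin_le (Set.singleton_subset_iff.mpr ⟨Sextic.f, Sextic.monic, hx⟩),
    x ^ 4 / 3, ⟨Sextic.f, Sextic.monic, Sextic.aeval_pow_four_div_three hx⟩,
    Sextic.pow_four_div_three_notMem_adjoin hx⟩
end

section
/- Let α be a root of x^6 + 3x^3 + 9 and ω = (1+i√3)/2. Then the element α^2(1+ω)/3 is an algebraic integer. -/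
/-!
From `α⁶ + 3α³ + 9 = 0` and `α³ = 3ω - 3` one gets `ω² - ω + 1 = 0`, i.e. `ω` is a primitive
sixth root of unity. Then `(1 + ω)³ = 6ω - 3` and `α⁶ = -9ω`, so `β = α²(1 + ω)/3` has
`β³ = 2 - ω`. As `2 - ω` is a root of `X² - 3X + 3`, `β` is a root of the monic integer
polynomial `X⁶ - 3X³ + 3`.
-/

open Polynomial

theorem isIntegral_int_of_pow_six_sub_three_mul_pow_three_add_three {A : Type*} [CommRing A] {x : A}
    (hx : x ^ 6 - 3 * x ^ 3 + 3 = 0) : IsIntegral ℤ x :=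
  ⟨X ^ 6 - 3 * X ^ 3 + C 3, by monicity!, by simpa [eval₂_eq_eval_map] using hx⟩

section

variable {K : Type*} [Field K] {α ω : K}

theorem sq_sub_add_one_eq_zero_of_pow_three_eq (h3 : (3 : K) ≠ 0)
    (hα : α ^ 6 + 3 * α ^ 3 + 9 = 0) (hβ : α ^ 3 = 3 * ω - 3) : ω ^ 2 - ω + 1 = 0 := by
  have h9 : (9 : K) ≠ 0 := by simpa [show (9 : K) = 3 * 3 by norm_num] using h3
  have : 9 * (ω ^ 2 - ω + 1) = 0 := by
    linear_combination hα - (α ^ 3 + 3 * ω) * hβ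
  exact (mul_eq_zero.mp this).resolve_left h9

theorem div_three_pow_three_eq_two_sub (h3 : (3 : K) ≠ 0) (hω : ω ^ 2 - ω + 1 = 0)
    (hβ : α ^ 3 = 3 * ω - 3) : (α ^ 2 * (1 + ω) / 3) ^ 3 = 2 - ω := by
  have hα6 : α ^ 6 = -9 * ω := by
    linear_combination (α ^ 3 + 3 * ω - 3) * hβ + 9 * hω
  have hω3 : (1 + ω) ^ 3 = 6 * ω - 3 := by linear_combination (ω + 4) * hω
  field_simp
  linear_combination (1 + ω) ^ 3 * hα6 - 9 * ω * hω3 - 54 * hω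

end

theorem stmt_4_general (α ω : ℂ) (hα : α^6 + 3*α^3 + 9 = 0)
    (hβ : α^3 = 3*ω - 3) :
    IsIntegral ℤ (α^2 * (1 + ω) / 3) := by
  have h3 : (3 : ℂ) ≠ 0 := three_ne_zero
  have hω := sq_sub_add_one_eq_zero_of_pow_three_eq h3 hα hβ
  have hcube := div_three_pow_three_eq_two_sub h3 hω hβ
  apply isIntegral_int_of_pow_six_sub_three_mul_pow_three_add_three
  linear_combination ((α ^ 2 * (1 + ω) / 3) ^ 3 - 1 - ω) * hcube + hω

/-- If `α` is a root of `x^6 + 3x^3 + 9` and `ω = (1+i√3)/2` (so `α^3 = 3ω-3`),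
then `α^2(1+ω)/3` is an algebraic integer. -/
theorem stmt_4 (α ω : ℂ) (hα : α^6 + 3*α^3 + 9 = 0)
    (hω : ω = (1 + Complex.I * Real.sqrt 3) / 2) (hβ : α^3 = 3*ω - 3) :
    IsIntegral ℤ (α^2 * (1 + ω) / 3) :=
  stmt_4_general α ω hα hβ
end

section
/- Let δ_1, δ_2, δ_3 ∈ ℂ be distinct, Z_1, Z_2 ∈ ℂ with ∏_{j=1}^{3}|Z_1 - δ_j Z_2| = c, and let j_0 achieve the minimum of |Z_1 - δ_j Z_2|. If |Z_2| > 10 c^{1/3} / m where m = min_{j≠j_0}|δ_j - δ_{j_0}|, then |Z_1 - δ_{j_0} Z_2| ≤ c / (0.81 m^2 |Z_2|^2). -/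
/-!
Write `a = |Z₁ - δ_{j₀}Z₂|` for the smallest of the three factors, so that `a³ ≤ c` and
`a ≤ c^{1/3} < m|Z₂|/10`. For `j ≠ j₀` the triangle inequality applied to
`(δⱼ - δ_{j₀})Z₂ = (Z₁ - δ_{j₀}Z₂) - (Z₁ - δⱼZ₂)` gives `|Z₁ - δⱼZ₂| ≥ m|Z₂| - a ≥ 0.9 m|Z₂|`,
and bounding these two factors of the product from below gives `a (0.9 m|Z₂|)² ≤ c`.
-/

open Finset

lemma norm_sub_mul_le_norm_sub_mul_add_norm_sub_mul {𝕜 : Type*} [NormedDivisionRing 𝕜]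
    (x z a b : 𝕜) : ‖a - b‖ * ‖z‖ ≤ ‖x - b * z‖ + ‖x - a * z‖ := by
  rw [← norm_mul, show (a - b) * z = (x - b * z) - (x - a * z) by noncomm_ring]
  exact norm_sub_le _ _

lemma Finset.mul_pow_card_sub_one_le_prod {ι R : Type*} [Fintype ι] [DecidableEq ι]
    [CommSemiring R] [PartialOrder R] [IsOrderedRing R] {f : ι → R} {L : R} (i : ι)
    (hf : ∀ j, 0 ≤ f j) (hL : 0 ≤ L) (hLf : ∀ j ≠ i, L ≤ f j) :
    f i * L ^ (Fintype.card ι - 1) ≤ ∏ j, f j := by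
  rw [← mul_prod_erase univ f (mem_univ i), ← card_univ, ← card_erase_of_mem (mem_univ i),
    ← prod_const]
  exact mul_le_mul_of_nonneg_left
    (prod_le_prod (fun _ _ => hL) fun j hj => hLf j (ne_of_mem_erase hj)) (hf i)

/-- Reduction estimate: if `∏ⱼ|Z₁ - δⱼZ₂| = c`, `j₀` achieves the minimum of
`|Z₁ - δⱼZ₂|`, `m = min_{j ≠ j₀}|δⱼ - δ_{j₀}|`, and `|Z₂| > 10c^{1/3}/m`, then
`|Z₁ - δ_{j₀}Z₂| ≤ c/(0.81 m² |Z₂|²)`. -/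
theorem stmt_15 (δ : Fin 3 → ℂ) (hδ : Function.Injective δ) (Z1 Z2 : ℂ)
    (c : ℝ) (hc : ∏ j : Fin 3, ‖Z1 - δ j * Z2‖ = c) (j0 : Fin 3)
    (hj0 : ∀ j, ‖Z1 - δ j0 * Z2‖ ≤ ‖Z1 - δ j * Z2‖)
    (m : ℝ) (hm : IsLeast {x | ∃ j, j ≠ j0 ∧ x = ‖δ j - δ j0‖} m)
    (hZ2 : ‖Z2‖ > 10 * c ^ ((1 : ℝ)/3) / m) :
    ‖Z1 - δ j0 * Z2‖ ≤ c / (0.81 * m^2 * ‖Z2‖ ^ 2) := by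
  set a := ‖Z1 - δ j0 * Z2‖
  have hm0 : 0 < m := by
    obtain ⟨j, hj, rfl⟩ := hm.1
    exact norm_pos_iff.mpr (sub_ne_zero.mpr (hδ.ne hj))
  have hc0 : 0 ≤ c := hc ▸ prod_nonneg fun j _ => norm_nonneg _
  have hZ2m : 10 * c ^ ((1 : ℝ) / 3) < m * ‖Z2‖ := by rwa [gt_iff_lt, div_lt_iff₀' hm0] at hZ2
  have ha_cube : a ^ 3 ≤ c := by
    simpa [← hc, ← pow_succ'] using mul_pow_card_sub_one_le_prod j0 (fun _ => norm_nonneg _)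
      (norm_nonneg _) fun j _ => hj0 j
  have ha_root : a ≤ c ^ ((1 : ℝ) / 3) := by
    rw [one_div, Real.le_rpow_inv_iff_of_pos (norm_nonneg _) hc0 (by norm_num)]
    exact_mod_cast ha_cube
  have hfar : ∀ j ≠ j0, 0.9 * m * ‖Z2‖ ≤ ‖Z1 - δ j * Z2‖ := fun j hj => by
    have := norm_sub_mul_le_norm_sub_mul_add_norm_sub_mul Z1 Z2 (δ j) (δ j0)
    nlinarith [hm.2 ⟨j, hj, rfl⟩, norm_nonneg Z2]
  have hprod : a * (0.9 * m * ‖Z2‖) ^ 2 ≤ c :=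
    hc ▸ mul_pow_card_sub_one_le_prod j0 (fun _ => norm_nonneg _) (by positivity) hfar
  have hZ2_pos : 0 < ‖Z2‖ := lt_of_le_of_lt (by positivity) hZ2
  rw [le_div_iff₀ (by positivity)]
  linarith
end
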